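/- Let μ be an atomless probability measure on ℝ and let S_1,...,S_N be independent random variables each with law μ (i.e., the sample ω = (S_1,...,S_N) is distributed according to the N-fold product measure μ^N). Fix ε ∈ (0,1), β ∈ (0,1), and a natural number k < N satisfying ∑_{i=0}^{k} C(N,i) · ε^i · (1-ε)^{N-i} ≤ β. Define the calibration level δ(ω) as the (N-k)-th smallest value among S_1(ω),...,S_N(ω) (equivalently, the (N-k)/N empirical quantile of the sample). Then, with probability at least 1-β over the draw of the sample ω ~ μ^N, it holds that μ({ s ∈ ℝ : s > δ(ω) }) ≤ ε. -/

import Mathlib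

open MeasureTheory ProbabilityTheory Finset

/-!
Because `μ` has no atoms its CDF is continuous, so some threshold `t` has `μ [t, ∞) = ε`.
If at least `k + 1` of the `N` samples lie in `[t, ∞)`, the `(N - k)`-th smallest sample is
`≥ t`, whence `μ (δ, ∞) ≤ μ [t, ∞) = ε`. The number of samples in `[t, ∞)` is binomial with
parameters `N` and `ε`, so the failure event has probability
`∑_{i ≤ k} C(N, i) ε^i (1 - ε)^(N - i) ≤ β`.
-/

theorem ProbabilityTheory.continuous_cdf (μ : Measure ℝ) [IsProbabilityMeasure μ]
    [NullSingletonClass μ] : Continuous (cdf μ) := by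
  refine continuous_iff_continuousAt.2 fun x => ?_
  have hmono := monotone_cdf μ
  have hright : Function.rightLim (cdf μ) x = cdf μ x :=
    hmono.continuousWithinAt_Ioi_iff_rightLim_eq.1
      (((cdf μ).right_continuous x).mono Set.Ioi_subset_Ici_self)
  have hjump : (cdf μ).measure {x} = 0 := by rw [measure_cdf, measure_singleton]
  rw [StieltjesFunction.measure_singleton, ENNReal.ofReal_eq_zero] at hjump
  rw [hmono.continuousAt_iff_leftLim_eq_rightLim, hright]
  exact le_antisymm (hmono.leftLim_le le_rfl) (sub_nonpos.1 hjump)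

theorem ProbabilityTheory.exists_measureReal_Iio_eq (μ : Measure ℝ) [IsProbabilityMeasure μ]
    [NullSingletonClass μ] {c : ℝ} (hc : c ∈ Set.Ioo 0 1) : ∃ t, μ.real (Set.Iio t) = c := by
  obtain ⟨a, ha⟩ := ((tendsto_cdf_atBot μ).eventually_lt_const hc.1).exists
  obtain ⟨b, hb⟩ := ((tendsto_cdf_atTop μ).eventually_const_lt hc.2).exists
  obtain ⟨t, ht⟩ := intermediate_value_univ a b (continuous_cdf μ) ⟨ha.le, hb.le⟩
  exact ⟨t, by rw [measureReal_congr Iio_ae_eq_Iic, ← cdf_eq_real, ht]⟩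

namespace Tuple

variable {n : ℕ} {α : Type*} [LinearOrder α]

theorem apply_sort_lt_iff_lt_card (f : Fin n → α) (j : Fin n) (a : α) :
    f (sort f j) < a ↔ j < #{i | f i < a} := by
  rw [← Finset.card_equiv (sort f) (s := {i | f (sort f i) < a}) (by simp)]
  exact (lt_card_lt_iff_apply_lt_of_monotone (monotone_sort f)).symm

theorem le_apply_sort_of_sub_le_card (f : Fin n → α) (j : Fin n) (a : α)
    (h : n - j ≤ #{i | a ≤ f i}) : a ≤ f (sort f j) := by
  by_contra! hlt
  have hlt_card := (apply_sort_lt_iff_lt_card f j a).1 hlt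
  have hsplit := Finset.card_filter_add_card_filter_not (s := univ) (fun i => f i < a)
  simp only [not_lt, card_univ, Fintype.card_fin] at hsplit
  omega

end Tuple

section Binomial

theorem setOf_forall_mem_iff_mem_eq_pi {ι α : Type*} [DecidableEq ι] (s : Set α) (T : Finset ι) :
    {ω : ι → α | ∀ i, ω i ∈ s ↔ i ∈ T} = Set.univ.pi fun i => if i ∈ T then s else sᶜ := by
  ext ω
  simp only [Set.mem_ofPred_eq, Set.mem_pi, Set.mem_univ, true_implies]
  refine forall_congr' fun i => ?_
  split_ifs with h <;> simp [h]

variable {ι α : Type*} [Fintype ι] [MeasurableSpace α] {μ : Measure α} {s : Set α}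

variable (μ) in
theorem measure_pi_setOf_forall_mem_iff_mem [SigmaFinite μ] (T : Finset ι) :
    Measure.pi (fun _ : ι => μ) {ω | ∀ i, ω i ∈ s ↔ i ∈ T} =
      μ s ^ #T * μ sᶜ ^ (Fintype.card ι - #T) := by
  classical
  rw [setOf_forall_mem_iff_mem_eq_pi, Measure.pi_pi]
  simp only [apply_ite μ]
  rw [Finset.prod_ite, Finset.prod_const, Finset.prod_const]
  simp [Finset.filter_not, ← Finset.compl_eq_univ_sdiff, Finset.card_compl]

theorem measurableSet_setOf_forall_mem_iff_mem (hs : MeasurableSet s) (T : Finset ι) :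
    MeasurableSet {ω : ι → α | ∀ i, ω i ∈ s ↔ i ∈ T} := by
  classical
  rw [setOf_forall_mem_iff_mem_eq_pi]
  exact .univ_pi fun i => by split_ifs; exacts [hs, hs.compl]

theorem measurable_card_filter_mem (hs : MeasurableSet s) [DecidablePred (· ∈ s)] :
    Measurable fun ω : ι → α => #{i | ω i ∈ s} := by
  simp only [Finset.card_filter]
  exact Finset.measurable_sum _ fun i _ =>
    Measurable.ite (measurable_pi_apply i hs) measurable_const measurable_const

variable (μ) in
theorem measure_pi_card_filter_mem_eq [SigmaFinite μ] (hs : MeasurableSet s)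
    [DecidablePred (· ∈ s)] (j : ℕ) :
    Measure.pi (fun _ : ι => μ) {ω | #{i | ω i ∈ s} = j} =
      (Fintype.card ι).choose j * μ s ^ j * μ sᶜ ^ (Fintype.card ι - j) := by
  have hunion : {ω : ι → α | #{i | ω i ∈ s} = j} =
      ⋃ T ∈ powersetCard j univ, {ω | ∀ i, ω i ∈ s ↔ i ∈ T} := by
    ext ω
    simp only [Set.mem_ofPred_eq, Set.mem_iUnion, mem_powersetCard, subset_univ, true_and,
      exists_prop]
    constructor
    · rintro rfl
      exact ⟨_, rfl, by simp⟩
    · rintro ⟨T, rfl, hT⟩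
      congr 1
      ext i
      simp [hT]
  have hdisj : Set.PairwiseDisjoint (powersetCard j (univ : Finset ι) : Set (Finset ι))
      fun T => {ω : ι → α | ∀ i, ω i ∈ s ↔ i ∈ T} := by
    intro T _ T' _ hne
    refine Set.disjoint_left.2 fun ω hT hT' => hne ?_
    ext i
    rw [← hT i, hT' i]
  rw [hunion, measure_biUnion_finset hdisj fun T _ => measurableSet_setOf_forall_mem_iff_mem hs T,
    sum_congr rfl fun T hT => by
      rw [measure_pi_setOf_forall_mem_iff_mem, (mem_powersetCard.1 hT).2],
    sum_const, card_powersetCard, card_univ, nsmul_eq_mul, mul_assoc]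

variable (μ) in
theorem measure_pi_card_filter_mem_le [SigmaFinite μ] (hs : MeasurableSet s)
    [DecidablePred (· ∈ s)] (k : ℕ) :
    Measure.pi (fun _ : ι => μ) {ω | #{i | ω i ∈ s} ≤ k} =
      ∑ j ∈ range (k + 1),
        (Fintype.card ι).choose j * μ s ^ j * μ sᶜ ^ (Fintype.card ι - j) := by
  have hunion : {ω : ι → α | #{i | ω i ∈ s} ≤ k} =
      ⋃ j ∈ range (k + 1), {ω | #{i | ω i ∈ s} = j} := by
    ext ω
    simp
  have hmeas (j : ℕ) : MeasurableSet {ω : ι → α | #{i | ω i ∈ s} = j} :=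
    measurable_card_filter_mem hs (measurableSet_singleton j)
  rw [hunion, measure_biUnion_finset (fun j _ j' _ hne => Set.disjoint_left.2 fun ω h h' =>
      hne (h.symm.trans h')) fun j _ => hmeas j]
  exact sum_congr rfl fun j _ => measure_pi_card_filter_mem_eq μ hs j

variable (μ) in
theorem measureReal_pi_card_filter_mem_le [IsFiniteMeasure μ] (hs : MeasurableSet s)
    [DecidablePred (· ∈ s)] (k : ℕ) :
    (Measure.pi fun _ : ι => μ).real {ω | #{i | ω i ∈ s} ≤ k} =
      ∑ j ∈ range (k + 1),
        (Fintype.card ι).choose j * μ.real s ^ j * μ.real sᶜ ^ (Fintype.card ι - j) := by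
  rw [measureReal_def, measure_pi_card_filter_mem_le μ hs, ENNReal.toReal_sum (by finiteness)]
  simp [measureReal_def]

end Binomial

/-- Conformal calibration guarantee (Theorem 1 of the paper, abstract form): let `μ` be an
atomless probability measure on `ℝ` (the law of the conformal score), let `k < N` satisfy
`∑_{i=0}^{k} C(N,i) ε^i (1-ε)^{N-i} ≤ β`, and let the calibration level `δ(ω)` be the
`(N-k)`-th smallest value of the i.i.d. sample `ω = (S_1, ..., S_N) ~ μ^N`. Then with
probability at least `1-β` over the draw of the sample, `μ({s : s > δ(ω)}) ≤ ε`. -/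
theorem conformal_calibration (μ : Measure ℝ) [IsProbabilityMeasure μ] [NullSingletonClass μ]
    (N : ℕ) (ε β : ℝ) (hε : ε ∈ Set.Ioo (0 : ℝ) 1)
    (k : ℕ) (hk : k < N)
    (hsum : ∑ i ∈ Finset.range (k + 1), (N.choose i : ℝ) * ε ^ i * (1 - ε) ^ (N - i) ≤ β) :
    ENNReal.ofReal (1 - β) ≤
      (Measure.pi fun _ : Fin N => μ)
        {ω | μ {s : ℝ | ω (Tuple.sort ω ⟨N - k - 1, by omega⟩) < s} ≤ ENNReal.ofReal ε} := by
  obtain ⟨t, hIio⟩ :=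
    exists_measureReal_Iio_eq μ (c := 1 - ε) ⟨by linarith [hε.2], by linarith [hε.1]⟩
  have hIci : μ.real (Set.Ici t) = ε := by
    rw [← Set.compl_Iio, probReal_compl_eq_one_sub measurableSet_Iio, hIio, sub_sub_cancel]
  set bad := {ω : Fin N → ℝ | #{i | ω i ∈ Set.Ici t} ≤ k}
  have hbad_meas : MeasurableSet bad :=
    measurable_card_filter_mem measurableSet_Ici measurableSet_Iic
  have hbad : (Measure.pi fun _ : Fin N => μ).real bad ≤ β := by
    rwa [measureReal_pi_card_filter_mem_le μ measurableSet_Ici, Fintype.card_fin, hIci,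
      Set.compl_Ici, hIio]
  have hgood : badᶜ ⊆
      {ω | μ {s : ℝ | ω (Tuple.sort ω ⟨N - k - 1, by omega⟩) < s} ≤ ENNReal.ofReal ε} := by
    intro ω hω
    have hδ := Tuple.le_apply_sort_of_sub_le_card ω ⟨N - k - 1, by omega⟩ t (by
      simp only [bad, Set.mem_compl_iff, Set.mem_ofPred_eq, not_le, Set.mem_Ici] at hω
      rw [Fin.val_mk]
      omega)
    calc μ {s | ω (Tuple.sort ω ⟨N - k - 1, _⟩) < s} ≤ μ (Set.Ici t) :=
          measure_mono fun s hs => hδ.trans hs.le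
      _ = ENNReal.ofReal ε := by rw [← hIci, ofReal_measureReal]
  calc ENNReal.ofReal (1 - β)
      ≤ ENNReal.ofReal ((Measure.pi fun _ : Fin N => μ).real badᶜ) := by
        rw [probReal_compl_eq_one_sub hbad_meas]
        exact ENNReal.ofReal_le_ofReal (by linarith)
    _ = (Measure.pi fun _ : Fin N => μ) badᶜ := ofReal_measureReal
    _ ≤ _ := measure_mono hgood
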